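/- For all smooth functions τ, α, β, σ : ℝ → ℝ, the Lie brackets satisfy [Dᵗ(τ), Rˣ(α)] = Rˣ(τα' + (1/3)τ'α), [Dᵗ(τ), Rʸ(β)] = Rʸ(τβ' + (1/3)τ'β), and [Dᵗ(τ), Z(σ)] = Z(τσ'), as equalities of maps ℝ⁴ → ℝ⁴. -/

import Mathlib

/-- The Lie bracket of two vector fields on `ℝ⁴`, `[X,Y](p) = DY(p)(X(p)) − DX(p)(Y(p))`. -/
noncomputable def lieBracket (X Y : ℝ × ℝ × ℝ × ℝ → ℝ × ℝ × ℝ × ℝ) :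
    ℝ × ℝ × ℝ × ℝ → ℝ × ℝ × ℝ × ℝ :=
  fun p => fderiv ℝ Y p (X p) - fderiv ℝ X p (Y p)

/-- `Dᵗ(τ)(t,x,y,u) = (τ(t), τ'(t)x/3, τ'(t)y/3, −τ''(t)(x³+y³)/18)`. -/
noncomputable def Dt (τ : ℝ → ℝ) : ℝ × ℝ × ℝ × ℝ → ℝ × ℝ × ℝ × ℝ :=
  fun p => (τ p.1, deriv τ p.1 * p.2.1 / 3, deriv τ p.1 * p.2.2.1 / 3,
    -deriv (deriv τ) p.1 * (p.2.1 ^ 3 + p.2.2.1 ^ 3) / 18)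

/-- `Dˢ(t,x,y,u) = (0, x, y, 3u)`. -/
noncomputable def Ds : ℝ × ℝ × ℝ × ℝ → ℝ × ℝ × ℝ × ℝ :=
  fun p => (0, p.2.1, p.2.2.1, 3 * p.2.2.2)

/-- `Pˣ(χ)(t,x,y,u) = (0, χ(t), 0, −χ'(t)x²/2)`. -/
noncomputable def Px (χ : ℝ → ℝ) : ℝ × ℝ × ℝ × ℝ → ℝ × ℝ × ℝ × ℝ :=
  fun p => (0, χ p.1, 0, -deriv χ p.1 * p.2.1 ^ 2 / 2)

/-- `Pʸ(ρ)(t,x,y,u) = (0, 0, ρ(t), −ρ'(t)y²/2)`. -/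
noncomputable def Py (ρ : ℝ → ℝ) : ℝ × ℝ × ℝ × ℝ → ℝ × ℝ × ℝ × ℝ :=
  fun p => (0, 0, ρ p.1, -deriv ρ p.1 * p.2.2.1 ^ 2 / 2)

/-- `Rˣ(α)(t,x,y,u) = (0,0,0, α(t)x)`. -/
noncomputable def Rx (α : ℝ → ℝ) : ℝ × ℝ × ℝ × ℝ → ℝ × ℝ × ℝ × ℝ :=
  fun p => (0, 0, 0, α p.1 * p.2.1)

/-- `Rʸ(β)(t,x,y,u) = (0,0,0, β(t)y)`. -/
noncomputable def Ry (β : ℝ → ℝ) : ℝ × ℝ × ℝ × ℝ → ℝ × ℝ × ℝ × ℝ :=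
  fun p => (0, 0, 0, β p.1 * p.2.2.1)

/-- `Z(σ)(t,x,y,u) = (0,0,0, σ(t))`. -/
noncomputable def Zf (σ : ℝ → ℝ) : ℝ × ℝ × ℝ × ℝ → ℝ × ℝ × ℝ × ℝ :=
  fun p => (0, 0, 0, σ p.1)

namespace BracketAux

/-- first coordinate projection -/
noncomputable def q1 : (ℝ × ℝ × ℝ × ℝ) →L[ℝ] ℝ := ContinuousLinearMap.fst ℝ ℝ (ℝ × ℝ × ℝ)

/-- second coordinate projection -/
noncomputable def q2 : (ℝ × ℝ × ℝ × ℝ) →L[ℝ] ℝ :=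
  (ContinuousLinearMap.fst ℝ ℝ (ℝ × ℝ)).comp (ContinuousLinearMap.snd ℝ ℝ (ℝ × ℝ × ℝ))

/-- third coordinate projection -/
noncomputable def q3 : (ℝ × ℝ × ℝ × ℝ) →L[ℝ] ℝ :=
  (ContinuousLinearMap.fst ℝ ℝ ℝ).comp
    ((ContinuousLinearMap.snd ℝ ℝ (ℝ × ℝ)).comp (ContinuousLinearMap.snd ℝ ℝ (ℝ × ℝ × ℝ)))

@[simp] lemma q1_apply (v : ℝ × ℝ × ℝ × ℝ) : q1 v = v.1 := rfl
@[simp] lemma q2_apply (v : ℝ × ℝ × ℝ × ℝ) : q2 v = v.2.1 := rfl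
@[simp] lemma q3_apply (v : ℝ × ℝ × ℝ × ℝ) : q3 v = v.2.2.1 := rfl

lemma hq1 (p : ℝ × ℝ × ℝ × ℝ) : HasFDerivAt (fun q : ℝ × ℝ × ℝ × ℝ => q.1) q1 p :=
  hasFDerivAt_fst

lemma hq2 (p : ℝ × ℝ × ℝ × ℝ) : HasFDerivAt (fun q : ℝ × ℝ × ℝ × ℝ => q.2.1) q2 p :=
  hasFDerivAt_fst.comp p hasFDerivAt_snd

lemma hq3 (p : ℝ × ℝ × ℝ × ℝ) : HasFDerivAt (fun q : ℝ × ℝ × ℝ × ℝ => q.2.2.1) q3 p :=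
  hasFDerivAt_fst.comp p ((hasFDerivAt_snd).comp p hasFDerivAt_snd)

lemma hcomp1 (f : ℝ → ℝ) (hf : Differentiable ℝ f) (p : ℝ × ℝ × ℝ × ℝ) :
    HasFDerivAt (fun q : ℝ × ℝ × ℝ × ℝ => f q.1) (deriv f p.1 • q1) p :=
  (hf p.1).hasDerivAt.comp_hasFDerivAt p (hq1 p)

lemma hcube2 (p : ℝ × ℝ × ℝ × ℝ) :
    HasFDerivAt (fun q : ℝ × ℝ × ℝ × ℝ => q.2.1 ^ 3) ((3 * p.2.1 ^ 2 : ℝ) • q2) p := by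
  have := (hasDerivAt_pow 3 p.2.1).comp_hasFDerivAt p (hq2 p)
  simpa [Function.comp_def] using this

lemma hcube3 (p : ℝ × ℝ × ℝ × ℝ) :
    HasFDerivAt (fun q : ℝ × ℝ × ℝ × ℝ => q.2.2.1 ^ 3) ((3 * p.2.2.1 ^ 2 : ℝ) • q3) p := by
  have := (hasDerivAt_pow 3 p.2.2.1).comp_hasFDerivAt p (hq3 p)
  simpa [Function.comp_def] using this

lemma diff_deriv {f : ℝ → ℝ} (hf : ContDiff ℝ (⊤ : ℕ∞) f) : Differentiable ℝ (deriv f) := by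
  have h0 : ContDiff ℝ (↑(⊤ : ℕ∞)) f := hf.of_le (by simp)
  have h1 := h0.iterate_deriv 1
  simp only [Function.iterate_one] at h1
  exact h1.differentiable (by simp)

lemma diff_deriv2 {f : ℝ → ℝ} (hf : ContDiff ℝ (⊤ : ℕ∞) f) : Differentiable ℝ (deriv (deriv f)) := by
  have h0 : ContDiff ℝ (↑(⊤ : ℕ∞)) f := hf.of_le (by simp)
  have h1 := h0.iterate_deriv 2
  have h2 : deriv^[2] f = deriv (deriv f) := by
    funext x; simp [Function.iterate_succ, Function.comp]
  rw [h2] at h1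
  exact h1.differentiable (by simp)

lemma fderiv_Dt_apply (τ : ℝ → ℝ) (hτ : ContDiff ℝ (⊤ : ℕ∞) τ) (p v : ℝ × ℝ × ℝ × ℝ) :
    fderiv ℝ (Dt τ) p v = (deriv τ p.1 * v.1,
      (deriv (deriv τ) p.1 * v.1 * p.2.1 + deriv τ p.1 * v.2.1) / 3,
      (deriv (deriv τ) p.1 * v.1 * p.2.2.1 + deriv τ p.1 * v.2.2.1) / 3,
      -(deriv (deriv (deriv τ)) p.1 * v.1 * (p.2.1 ^ 3 + p.2.2.1 ^ 3)
        + deriv (deriv τ) p.1 * (3 * p.2.1 ^ 2 * v.2.1 + 3 * p.2.2.1 ^ 2 * v.2.2.1)) / 18) := by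
  have hτ1 := diff_deriv hτ
  have hτ2 := diff_deriv2 hτ
  have A := hcomp1 τ (hτ.differentiable (by simp)) p
  have B := ((hcomp1 (deriv τ) hτ1 p).mul (hq2 p)).mul_const (3:ℝ)⁻¹
  have C := ((hcomp1 (deriv τ) hτ1 p).mul (hq3 p)).mul_const (3:ℝ)⁻¹
  have D := (((hcomp1 (deriv (deriv τ)) hτ2 p).neg).mul ((hcube2 p).add (hcube3 p))).mul_const (18:ℝ)⁻¹
  have h : HasFDerivAt (Dt τ) _ p := A.prodMk (B.prodMk (C.prodMk D))
  rw [h.fderiv]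
  simp only [ContinuousLinearMap.prod_apply, ContinuousLinearMap.add_apply,
    ContinuousLinearMap.smul_apply, ContinuousLinearMap.coe_smul', Pi.smul_apply,
    ContinuousLinearMap.neg_apply, q1_apply, q2_apply, q3_apply, smul_eq_mul, Prod.mk.injEq, Pi.neg_apply, Pi.add_apply]
  refine ⟨trivial, by ring_nf, by ring_nf, by ring_nf⟩

end BracketAux

theorem bracket_Dt_Rx_Ry_Z (τ α β σ : ℝ → ℝ) (hτ : ContDiff ℝ (⊤ : ℕ∞) τ) (hα : ContDiff ℝ (⊤ : ℕ∞) α)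
    (hβ : ContDiff ℝ (⊤ : ℕ∞) β) (hσ : ContDiff ℝ (⊤ : ℕ∞) σ) :
    lieBracket (Dt τ) (Rx α) = Rx (fun t => τ t * deriv α t + deriv τ t * α t / 3) ∧
    lieBracket (Dt τ) (Ry β) = Ry (fun t => τ t * deriv β t + deriv τ t * β t / 3) ∧
    lieBracket (Dt τ) (Zf σ) = Zf (fun t => τ t * deriv σ t) := by
  open BracketAux in
  refine ⟨?_, ?_, ?_⟩
  · funext p
    have hDt := fderiv_Dt_apply τ hτ p
    have hR : HasFDerivAt (Rx α)
        ((0 : (ℝ×ℝ×ℝ×ℝ) →L[ℝ] ℝ).prod ((0 : (ℝ×ℝ×ℝ×ℝ) →L[ℝ] ℝ).prod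
          ((0 : (ℝ×ℝ×ℝ×ℝ) →L[ℝ] ℝ).prod
            (α p.1 • q2 + p.2.1 • deriv α p.1 • q1)))) p :=
      (hasFDerivAt_const (0:ℝ) p).prodMk ((hasFDerivAt_const (0:ℝ) p).prodMk
        ((hasFDerivAt_const (0:ℝ) p).prodMk
          ((hcomp1 α (hα.differentiable (by simp)) p).mul (hq2 p))))
    simp only [lieBracket, hDt, hR.fderiv, Dt, Rx]
    simp [Prod.ext_iff, q1, q2, q3, ContinuousLinearMap.smulRight_apply, smul_eq_mul]
    ring_nf
  · funext p
    have hDt := fderiv_Dt_apply τ hτ p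
    have hR : HasFDerivAt (Ry β)
        ((0 : (ℝ×ℝ×ℝ×ℝ) →L[ℝ] ℝ).prod ((0 : (ℝ×ℝ×ℝ×ℝ) →L[ℝ] ℝ).prod
          ((0 : (ℝ×ℝ×ℝ×ℝ) →L[ℝ] ℝ).prod
            (β p.1 • q3 + p.2.2.1 • deriv β p.1 • q1)))) p :=
      (hasFDerivAt_const (0:ℝ) p).prodMk ((hasFDerivAt_const (0:ℝ) p).prodMk
        ((hasFDerivAt_const (0:ℝ) p).prodMk
          ((hcomp1 β (hβ.differentiable (by simp)) p).mul (hq3 p))))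
    simp only [lieBracket, hDt, hR.fderiv, Dt, Ry]
    simp [Prod.ext_iff, q1, q2, q3, ContinuousLinearMap.smulRight_apply, smul_eq_mul]
    ring_nf
  · funext p
    have hDt := fderiv_Dt_apply τ hτ p
    have hR : HasFDerivAt (Zf σ)
        ((0 : (ℝ×ℝ×ℝ×ℝ) →L[ℝ] ℝ).prod ((0 : (ℝ×ℝ×ℝ×ℝ) →L[ℝ] ℝ).prod
          ((0 : (ℝ×ℝ×ℝ×ℝ) →L[ℝ] ℝ).prod (deriv σ p.1 • q1)))) p :=
      (hasFDerivAt_const (0:ℝ) p).prodMk ((hasFDerivAt_const (0:ℝ) p).prodMk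
        ((hasFDerivAt_const (0:ℝ) p).prodMk (hcomp1 σ (hσ.differentiable (by simp)) p)))
    simp only [lieBracket, hDt, hR.fderiv, Dt, Zf]
    simp [Prod.ext_iff, q1, q2, q3, ContinuousLinearMap.smulRight_apply, smul_eq_mul]
    ring_nf
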